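/- arXiv:2302.04229 — 3 statements merged into one kernel-verified Lean document; each statement's English description precedes it below -/
import Mathlib

section
/- For every string X, every fragment X[i..j), and every quasimetric weight function w, the weighted edit distance between X and its substring X[i..j) equals the weighted edit distance between the concatenation X[0..i)·X[j..|X|) and the empty string; that is, ed^w(X, X[i..j)) = Σ_{u ∈ [0..i) ∪ [j..|X|)} w(X[u], ε). -/
variable {σ : Type*}

/-- A weight function: nonnegative with `w a a = 0`. -/
def IsWeight (w : Option σ → Option σ → ℝ) : Prop :=
  (∀ a b, 0 ≤ w a b) ∧ (∀ a, w a a = 0)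

/-- A quasimetric: a weight function satisfying the triangle inequality. -/
def Quasimetric (w : Option σ → Option σ → ℝ) : Prop :=
  IsWeight w ∧ ∀ a b c, w a c ≤ w a b + w b c

/-- A normalized weight function: `w a b ≥ 1` whenever `a ≠ b`. -/
def Normalized (w : Option σ → Option σ → ℝ) : Prop :=
  IsWeight w ∧ ∀ a b, a ≠ b → 1 ≤ w a b

/-- `EdAux w X Y c` holds iff some alignment of `X` onto `Y` has total cost `c`,
where deleting `a` costs `w (some a) none`, inserting `b` costs `w none (some b)`, and
aligning `a` to `b` costs `w (some a) (some b)`. -/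
inductive EdAux (w : Option σ → Option σ → ℝ) : List σ → List σ → ℝ → Prop
  | nil : EdAux w [] [] 0
  | del {X Y : List σ} {c : ℝ} (a : σ) :
      EdAux w X Y c → EdAux w (a :: X) Y (w (some a) none + c)
  | ins {X Y : List σ} {c : ℝ} (b : σ) :
      EdAux w X Y c → EdAux w X (b :: Y) (w none (some b) + c)
  | sub {X Y : List σ} {c : ℝ} (a b : σ) :
      EdAux w X Y c → EdAux w (a :: X) (b :: Y) (w (some a) (some b) + c)

/-- Weighted edit distance: the minimum cost over all alignments. -/
noncomputable def ed (w : Option σ → Option σ → ℝ) (X Y : List σ) : ℝ :=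
  sInf {c | EdAux w X Y c}

/-- Weighted edit distance capped at threshold `k`: equals `ed w X Y` if that is `≤ k`,
and `∞` otherwise. -/
noncomputable def edK (w : Option σ → Option σ → ℝ) (k : ℝ) (X Y : List σ) : EReal :=
  if ed w X Y ≤ k then ((ed w X Y : ℝ) : EReal) else ⊤

open scoped Classical in
/-- The discrete weight function; `ed discreteW` is the unweighted (Levenshtein) distance. -/
noncomputable def discreteW : Option σ → Option σ → ℝ :=
  fun a b => if a = b then 0 else 1

/-- The fragment `X[i..j)`. -/
def seg (X : List σ) (i j : ℕ) : List σ := (X.drop i).take (j - i)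

/-!
An alignment of `X` onto its fragment `X[i..j)` may delete `X[0..i)`, match `X[i..j)` to itself
at cost zero and delete `X[j..|X|)`, so `ed^w(X, X[i..j))` is at most the deletion cost of the
complement. Conversely, the triangle inequality through `ε` shows that every alignment of `X`
onto `Y` costs at least `del(X) - del(Y)`, where `del` is the total deletion cost; for
`Y = X[i..j)` this difference is exactly the deletion cost of the complement.
-/

noncomputable def delCost (w : Option σ → Option σ → ℝ) (Z : List σ) : ℝ :=
  (Z.map (fun a => w (some a) none)).sum

@[simp]
lemma delCost_nil (w : Option σ → Option σ → ℝ) : delCost w [] = 0 := rfl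

@[simp]
lemma delCost_cons (w : Option σ → Option σ → ℝ) (a : σ) (Z : List σ) :
    delCost w (a :: Z) = w (some a) none + delCost w Z := by
  simp [delCost]

@[simp]
lemma delCost_append (w : Option σ → Option σ → ℝ) (Z Z' : List σ) :
    delCost w (Z ++ Z') = delCost w Z + delCost w Z' := by
  simp [delCost]

namespace EdAux

variable {w : Option σ → Option σ → ℝ}

lemma nil_right (w : Option σ → Option σ → ℝ) (Z : List σ) : EdAux w Z [] (delCost w Z) := by
  induction Z with
  | nil => exact nil
  | cons a Z ih => simpa using del a ih

lemma eq_delCost_of_nil_right {Z : List σ} {c : ℝ} (h : EdAux w Z [] c) : c = delCost w Z := by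
  generalize hY : ([] : List σ) = Y at h
  induction h with
  | nil => rfl
  | del a _ ih => simp [ih hY]
  | ins | sub => simp at hY

lemma append_left_deleted {X Y : List σ} {c : ℝ} (P : List σ) (h : EdAux w X Y c) :
    EdAux w (P ++ X) Y (delCost w P + c) := by
  induction P with
  | nil => simpa using h
  | cons a P ih => simpa [add_assoc] using del a ih

lemma append_left_matched (hrefl : ∀ a, w a a = 0) {X Y : List σ} {c : ℝ} (M : List σ)
    (h : EdAux w X Y c) : EdAux w (M ++ X) (M ++ Y) c := by
  induction M with
  | nil => simpa using h
  | cons a M ih => simpa [hrefl] using sub a a ih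

/-- Each alignment step is charged against deleting its characters via `ε`:
`w(a, ε) ≤ w(a, b) + w(b, ε)` for a substitution and `0 ≤ w(ε, b) + w(b, ε)` for an insertion. -/
lemma delCost_le (htri : ∀ a b c, w a c ≤ w a b + w b c) (hnone : w none none = 0)
    {X Y : List σ} {c : ℝ} (h : EdAux w X Y c) : delCost w X ≤ delCost w Y + c := by
  induction h with
  | nil => simp
  | del a _ ih => simp only [delCost_cons]; linarith
  | ins b _ ih =>
    have := htri none (some b) none
    simp only [delCost_cons]; linarith
  | sub a b _ ih =>
    have := htri (some a) (some b) none
    simp only [delCost_cons]; linarith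

end EdAux

lemma ed_nil_right (w : Option σ → Option σ → ℝ) (Z : List σ) : ed w Z [] = delCost w Z := by
  have hcosts : {c | EdAux w Z [] c} = {delCost w Z} :=
    Set.eq_singleton_iff_unique_mem.2
      ⟨EdAux.nil_right w Z, fun _ hc => EdAux.eq_delCost_of_nil_right hc⟩
  rw [ed, hcosts, csInf_singleton]

lemma take_append_seg_append_drop (X : List σ) {i j : ℕ} (hij : i ≤ j) :
    X.take i ++ seg X i j ++ X.drop j = X := by
  have hdrop : (X.drop i).drop (j - i) = X.drop j := by
    rw [List.drop_drop]; congr 1; omega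
  rw [List.append_assoc, seg, ← hdrop, List.take_append_drop, List.take_append_drop]

lemma isLeast_delCost_seg {w : Option σ → Option σ → ℝ} (hw : Quasimetric w) (X : List σ)
    {i j : ℕ} (hij : i ≤ j) :
    IsLeast {c | EdAux w X (seg X i j) c} (delCost w (X.take i ++ X.drop j)) := by
  obtain ⟨⟨-, hrefl⟩, htri⟩ := hw
  have hX := take_append_seg_append_drop X hij
  constructor
  · have halign := ((EdAux.nil_right w (X.drop j)).append_left_matched hrefl
      (seg X i j)).append_left_deleted (X.take i)
    rw [List.append_nil, ← List.append_assoc, hX] at halign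
    simpa using halign
  · intro c hc
    have hle := EdAux.delCost_le htri (hrefl none) hc
    have hsplit := congrArg (delCost w) hX
    simp only [delCost_append] at hsplit ⊢
    linarith

theorem ed_substring_eq_deletion_cost_general (w : Option σ → Option σ → ℝ) (hw : Quasimetric w)
    (X : List σ) (i j : ℕ) (hij : i ≤ j) :
    ed w X (seg X i j) = ed w (X.take i ++ X.drop j) [] ∧
    ed w X (seg X i j) = ((X.take i ++ X.drop j).map (fun a => w (some a) none)).sum := by
  have hed : ed w X (seg X i j) = delCost w (X.take i ++ X.drop j) :=
    (isLeast_delCost_seg hw X hij).csInf_eq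
  exact ⟨hed.trans (ed_nil_right w _).symm, hed⟩

/-- For every string `X`, every fragment `X[i..j)`, and every quasimetric
weight function `w`: `ed^w(X, X[i..j))` equals `ed^w(X[0..i) ++ X[j..|X|), ε)`, i.e. the
total deletion cost `Σ_{u ∈ [0..i) ∪ [j..|X|)} w(X[u], ε)`. -/
theorem ed_substring_eq_deletion_cost (w : Option σ → Option σ → ℝ) (hw : Quasimetric w)
    (X : List σ) (i j : ℕ) (hij : i ≤ j) (hj : j ≤ X.length) :
    ed w X (seg X i j) = ed w (X.take i ++ X.drop j) [] ∧
    ed w X (seg X i j) = ((X.take i ++ X.drop j).map (fun a => w (some a) none)).sum :=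
  ed_substring_eq_deletion_cost_general w hw X i j hij
end

section
/- Let k ≥ 1 be an integer, Q a string, and e, e' ≥ 4k integers. Then for every normalized weight function w, the strings Q^e and Q^{e'} are ed^w_{≤k}-equivalent: for all strings X and Y containing occurrences of Q^e at positions p_X and p_Y respectively with |p_X − p_Y| ≤ k, replacing both occurrences by Q^{e'} leaves the capped weighted edit distance ed^w_{≤k}(X,Y) unchanged. -/
variable {σ : Type*}

/-- `Q^e`: concatenation of `e` copies of `Q`. -/
def listPow (Q : List σ) (e : ℕ) : List σ := (List.replicate e Q).flatten

/-- `P` occurs in `X` at position `p`. -/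
def OccursAt (P X : List σ) (p : ℕ) : Prop :=
  p + P.length ≤ X.length ∧ seg X p (p + P.length) = P

/-- A primitive string: nonempty and not a proper power. -/
def Primitive (Q : List σ) : Prop :=
  Q ≠ [] ∧ ∀ (R : List σ) (m : ℕ), 2 ≤ m → Q ≠ listPow R m

/-- `S` avoids `k`-periodicity: it contains no substring `Q^{4k+1}` with `|Q| ∈ [1..2k]`. -/
def AvoidsPeriodicity (k : ℕ) (S : List σ) : Prop :=
  ∀ Q : List σ, 1 ≤ Q.length → Q.length ≤ 2 * k → ¬ listPow Q (4 * k + 1) <:+: S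

/-- `P` and `P'` are `ed^w_{≤k}`-equivalent: replacing `k`-synchronized occurrences of `P`
in `X` and `Y` by `P'` preserves the capped weighted edit distance. -/
def EdEquiv (w : Option σ → Option σ → ℝ) (k : ℕ) (P P' : List σ) : Prop :=
  ∀ (X Y : List σ) (pX pY : ℕ),
    OccursAt P X pX → OccursAt P Y pY → |(pX : ℤ) - (pY : ℤ)| ≤ (k : ℤ) →
    edK w (k : ℝ) X Y =
      edK w (k : ℝ) (X.take pX ++ P' ++ X.drop (pX + P.length))
        (Y.take pY ++ P' ++ Y.drop (pY + P.length))

/-!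
An alignment of cost `< k + 1` under a normalized weight makes at most `k` mismatches. As the
two occurrences of `Q^e` start within `k` of each other and `e ≥ 4k`, a pigeonhole argument finds
`|Q|` consecutive matches lying inside both occurrences. On each side they align a window of
length `|Q|` of `Q^e`, so repeating or dropping this block of matches gives an alignment of the
same cost with `Q^(e+1)`, resp. `Q^(e-1)`, in place of `Q^e`. Thus the alignments of cost `≤ k`
are the same for all exponents `≥ 4k`.
-/

lemma List.exists_append_length_filterMap_eq {α β : Type*} (f : α → Option β) :
    ∀ (l : List α) {n : ℕ}, n ≤ (l.filterMap f).length →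
      ∃ p r, l = p ++ r ∧ (p.filterMap f).length = n
  | l, 0, _ => ⟨[], l, rfl, rfl⟩
  | [], n + 1, h => by simp at h
  | x :: l, n + 1, h => by
    cases hx : f x with
    | none =>
      obtain ⟨p, r, rfl, hp⟩ := exists_append_length_filterMap_eq f l (n := n + 1)
        (by simpa [List.filterMap_cons, hx] using h)
      exact ⟨x :: p, r, rfl, by simpa [List.filterMap_cons, hx] using hp⟩
    | some y =>
      obtain ⟨p, r, rfl, hp⟩ := exists_append_length_filterMap_eq f l (n := n)
        (by simpa [List.filterMap_cons, hx] using h)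
      exact ⟨x :: p, r, rfl, by simp [hx, hp]⟩

lemma List.eq_append_take_of_append_eq {α : Type*} {Y₁ Y₂ C P D : List α} {t : ℕ}
    (h : Y₁ ++ Y₂ = C ++ P ++ D) (hY₁ : Y₁.length = C.length + t) (ht : t ≤ P.length) :
    Y₁ = C ++ P.take t ∧ Y₂ = P.drop t ++ D := by
  constructor
  · rw [← List.take_left' (l₂ := Y₂) hY₁, h, List.append_assoc, List.take_length_add_append,
      List.take_append_of_le_length ht]
  · rw [← List.drop_left' (l₂ := Y₂) hY₁, h, List.append_assoc, List.drop_length_add_append,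
      List.drop_append_of_le_length ht]

/-- Derivations of `EdAux w X Y c` are handled as lists of edit operations aligning `X` onto `Y`
at cost `c` (`Alignment.edAux_src_tgt`, `Alignment.exists_of_edAux`), which can be cut and
spliced. -/
inductive EditOp (σ : Type*)
  | del (a : σ)
  | ins (b : σ)
  | sub (a b : σ)

namespace EditOp

def src : EditOp σ → Option σ
  | del a => some a
  | ins _ => none
  | sub a _ => some a

def tgt : EditOp σ → Option σ
  | del _ => none
  | ins b => some b
  | sub _ b => some b

def cost (w : Option σ → Option σ → ℝ) (op : EditOp σ) : ℝ := w op.src op.tgt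

@[simp] lemma src_del (a : σ) : (del a).src = some a := rfl
@[simp] lemma src_ins (b : σ) : (ins b).src = none := rfl
@[simp] lemma src_sub (a b : σ) : (sub a b).src = some a := rfl
@[simp] lemma tgt_del (a : σ) : (del a).tgt = none := rfl
@[simp] lemma tgt_ins (b : σ) : (ins b).tgt = some b := rfl
@[simp] lemma tgt_sub (a b : σ) : (sub a b).tgt = some b := rfl

end EditOp

namespace Alignment

open EditOp

def src (o : List (EditOp σ)) : List σ := o.filterMap EditOp.src

def tgt (o : List (EditOp σ)) : List σ := o.filterMap EditOp.tgt

def cost (w : Option σ → Option σ → ℝ) (o : List (EditOp σ)) : ℝ := (o.map (EditOp.cost w)).sum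

def mismatches [DecidableEq σ] (o : List (EditOp σ)) : ℕ := o.countP fun op => op.src ≠ op.tgt

def ofMatches (R : List σ) : List (EditOp σ) := R.map fun a => sub a a

@[simp] lemma src_append (o o' : List (EditOp σ)) : src (o ++ o') = src o ++ src o' :=
  List.filterMap_append

@[simp] lemma tgt_append (o o' : List (EditOp σ)) : tgt (o ++ o') = tgt o ++ tgt o' :=
  List.filterMap_append

@[simp] lemma cost_append (w : Option σ → Option σ → ℝ) (o o' : List (EditOp σ)) :
    cost w (o ++ o') = cost w o + cost w o' := by
  simp [cost]

@[simp] lemma src_ofMatches (R : List σ) : src (ofMatches R) = R := by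
  induction R <;> simp_all [src, ofMatches, EditOp.src]

@[simp] lemma tgt_ofMatches (R : List σ) : tgt (ofMatches R) = R := by
  induction R <;> simp_all [tgt, ofMatches, EditOp.tgt]

lemma cost_ofMatches {w : Option σ → Option σ → ℝ} (hw : IsWeight w) (R : List σ) :
    cost w (ofMatches R) = 0 := by
  simp [cost, ofMatches, EditOp.cost, Function.comp_def, hw.2]

lemma edAux_src_tgt (w : Option σ → Option σ → ℝ) (o : List (EditOp σ)) :
    EdAux w (src o) (tgt o) (cost w o) := by
  induction o with
  | nil => exact EdAux.nil
  | cons op o ih =>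
    cases op with
    | del a => simpa [src, tgt, cost, EditOp.cost, List.filterMap_cons] using ih.del a
    | ins b => simpa [src, tgt, cost, EditOp.cost, List.filterMap_cons] using ih.ins b
    | sub a b => simpa [src, tgt, cost, EditOp.cost, List.filterMap_cons] using ih.sub a b

lemma exists_of_edAux {w : Option σ → Option σ → ℝ} {X Y : List σ} {c : ℝ}
    (h : EdAux w X Y c) : ∃ o, src o = X ∧ tgt o = Y ∧ cost w o = c := by
  induction h with
  | nil => exact ⟨[], rfl, rfl, rfl⟩
  | del a _ ih =>
    obtain ⟨o, rfl, rfl, rfl⟩ := ih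
    exact ⟨del a :: o, rfl, rfl, by simp [cost, EditOp.cost]⟩
  | ins b _ ih =>
    obtain ⟨o, rfl, rfl, rfl⟩ := ih
    exact ⟨ins b :: o, rfl, rfl, by simp [cost, EditOp.cost]⟩
  | sub a b _ ih =>
    obtain ⟨o, rfl, rfl, rfl⟩ := ih
    exact ⟨sub a b :: o, rfl, rfl, by simp [cost, EditOp.cost]⟩

lemma eq_ofMatches_src {o : List (EditOp σ)} (h : ∀ op ∈ o, op.src = op.tgt) :
    o = ofMatches (src o) := by
  induction o with
  | nil => rfl
  | cons op o ih =>
    obtain ⟨a, rfl⟩ : ∃ a, op = sub a a := by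
      have hop := h op List.mem_cons_self
      cases op with
      | del a => simp at hop
      | ins b => simp at hop
      | sub a b => exact ⟨a, by rw [Option.some_inj.mp hop]⟩
    have ho := ih fun op' hop' => h op' (List.mem_cons_of_mem _ hop')
    simp only [ofMatches, src, List.filterMap_cons, src_sub, List.map_cons] at ho ⊢
    rw [← ho]

variable [DecidableEq σ]

lemma mismatches_append (o o' : List (EditOp σ)) :
    mismatches (o ++ o') = mismatches o + mismatches o' :=
  List.countP_append

lemma mismatches_le_cost {w : Option σ → Option σ → ℝ} (hw : Normalized w)
    (o : List (EditOp σ)) : (mismatches o : ℝ) ≤ cost w o := by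
  induction o with
  | nil => simp [mismatches, cost]
  | cons op o ih =>
    have hop : ((if op.src ≠ op.tgt then 1 else 0 : ℕ) : ℝ) ≤ EditOp.cost w op := by
      split_ifs with h
      · exact_mod_cast hw.2 _ _ h
      · exact_mod_cast hw.1.1 _ _
    simp only [mismatches, cost, List.countP_cons, List.map_cons, List.sum_cons,
      decide_eq_true_eq] at ih ⊢
    push_cast at hop ⊢
    linarith

lemma length_tgt_le (o : List (EditOp σ)) : (tgt o).length ≤ (src o).length + mismatches o := by
  induction o with
  | nil => simp [src, tgt]
  | cons op o ih =>
    have hop : (tgt [op]).length ≤ (src [op]).length + mismatches [op] := by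
      cases op with
      | sub a b => by_cases a = b <;> simp_all [src, tgt, mismatches]
      | _ => simp [src, tgt, mismatches, List.filterMap_cons]
    rw [← List.singleton_append, tgt_append, src_append, mismatches_append]
    simp only [List.length_append]
    omega

lemma length_src_le (o : List (EditOp σ)) : (src o).length ≤ (tgt o).length + mismatches o := by
  induction o with
  | nil => simp [src, tgt]
  | cons op o ih =>
    have hop : (src [op]).length ≤ (tgt [op]).length + mismatches [op] := by
      cases op with
      | sub a b => by_cases a = b <;> simp_all [src, tgt, mismatches]
      | _ => simp [src, tgt, mismatches, List.filterMap_cons]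
    rw [← List.singleton_append, src_append, tgt_append, mismatches_append]
    simp only [List.length_append]
    omega

lemma exists_prefix_between {o : List (EditOp σ)} {k n m : ℕ} (hk : mismatches o ≤ k)
    (hn : n ≤ (src o).length) (hm : m ≤ (tgt o).length) (hnm : n ≤ m + k) (hmn : m ≤ n + k) :
    ∃ p r, o = p ++ r ∧ n ≤ (src p).length ∧ (src p).length ≤ n + 2 * k ∧
      m ≤ (tgt p).length ∧ (tgt p).length ≤ m + 2 * k := by
  obtain ⟨p, r, rfl, hp⟩ := List.exists_append_length_filterMap_eq EditOp.src o hn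
  rw [← src] at hp
  have hmis := mismatches_append p r
  rcases le_total m (tgt p).length with hmp | hpm
  · have htp := length_tgt_le p
    exact ⟨p, r, rfl, hp.ge, by omega, hmp, by omega⟩
  · have hr : m - (tgt p).length ≤ (tgt r).length := by
      rw [tgt_append, List.length_append] at hm
      omega
    obtain ⟨p', r', rfl, hp'⟩ := List.exists_append_length_filterMap_eq EditOp.tgt r hr
    rw [← tgt] at hp'
    have hsp := length_src_le p
    have hsp' := length_src_le p'
    have hmis' := mismatches_append p' r'
    refine ⟨p ++ p', r', by simp, ?_, ?_, ?_, ?_⟩ <;> simp only [src_append, tgt_append,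
      List.length_append] <;> omega

lemma exists_ofMatches_prefix_or_mismatch (o : List (EditOp σ)) {q : ℕ} (hq : q ≤ o.length) :
    (∃ R v, o = ofMatches R ++ v ∧ R.length = q) ∨
      ∃ s op l, o = s ++ op :: l ∧ s.length < q ∧ mismatches l < mismatches o := by
  by_cases hmatch : ∀ op ∈ o.take q, op.src = op.tgt
  · refine .inl ⟨src (o.take q), o.drop q, ?_, ?_⟩
    · rw [← eq_ofMatches_src hmatch, List.take_append_drop]
    · rw [← List.length_map .., ← ofMatches, ← eq_ofMatches_src hmatch, List.length_take]
      omega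
  · push Not at hmatch
    obtain ⟨op, hop, hne⟩ := hmatch
    obtain ⟨s, s', hs⟩ := List.append_of_mem hop
    have hslen : s.length < q := by
      have := congrArg List.length hs
      simp only [List.length_take, List.length_append, List.length_cons] at this; omega
    have ho : o = s ++ op :: (s' ++ o.drop q) :=
      calc o = o.take q ++ o.drop q := (List.take_append_drop q o).symm
        _ = s ++ op :: (s' ++ o.drop q) := by rw [hs, List.append_assoc, List.cons_append]
    have hop : mismatches [op] = 1 := by simp [mismatches, hne]
    refine .inr ⟨s, op, s' ++ o.drop q, ho, hslen, ?_⟩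
    have hcount := congrArg mismatches ho
    rw [mismatches_append, ← List.singleton_append, mismatches_append, hop] at hcount
    omega

/-- Pigeonhole: stepping past a mismatch among the next `q` operations costs fewer than `q + 1`
positions, and this happens at most `b` times. -/
lemma exists_ofMatches_window (q b : ℕ) {o : List (EditOp σ)} (hb : mismatches o ≤ b)
    (hlen : q * (b + 1) ≤ o.length) :
    ∃ u R v, o = u ++ ofMatches R ++ v ∧ R.length = q ∧ u.length ≤ q * b := by
  induction b generalizing o with
  | zero =>
    rcases exists_ofMatches_prefix_or_mismatch o (q := q) (by simpa using hlen) with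
      ⟨R, v, rfl, hR⟩ | ⟨s, op, l, -, -, hl⟩
    · exact ⟨[], R, v, rfl, hR, by simp⟩
    · omega
  | succ b ih =>
    rcases exists_ofMatches_prefix_or_mismatch o (q := q) (by nlinarith) with
      ⟨R, v, rfl, hR⟩ | ⟨s, op, l, rfl, hs, hl⟩
    · exact ⟨[], R, v, rfl, hR, by simp⟩
    · simp only [List.length_append, List.length_cons] at hlen
      obtain ⟨u, R, v, rfl, hR, hu⟩ := ih (o := l) (by omega) (by nlinarith)
      refine ⟨s ++ op :: u, R, v, by simp, hR, ?_⟩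
      simp only [List.length_append, List.length_cons]
      nlinarith

lemma exists_matched_window {o : List (EditOp σ)} {A B C D P : List σ} {k q : ℕ}
    (hsrc : src o = A ++ P ++ B) (htgt : tgt o = C ++ P ++ D) (hmis : mismatches o ≤ k)
    (hAC : A.length ≤ C.length + k) (hCA : C.length ≤ A.length + k)
    (hP : 2 * k + q * (k + 1) ≤ P.length) :
    ∃ O₁ R O₂, o = O₁ ++ ofMatches R ++ O₂ ∧ R.length = q ∧
      A.length ≤ (src O₁).length ∧ (src O₁).length + q ≤ A.length + P.length ∧
      C.length ≤ (tgt O₁).length ∧ (tgt O₁).length + q ≤ C.length + P.length := by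
  have hqk : q * (k + 1) = q * k + q := Nat.mul_add_one q k
  have hsrc_len := congrArg List.length hsrc
  have htgt_len := congrArg List.length htgt
  simp only [List.length_append] at hsrc_len htgt_len
  obtain ⟨p, r, rfl, hp₁, hp₂, hp₃, hp₄⟩ :=
    exists_prefix_between hmis (n := A.length) (m := C.length) (by omega) (by omega) hAC hCA
  have hmis_r : mismatches r ≤ k := by rw [mismatches_append] at hmis; omega
  have hr : q * (k + 1) ≤ r.length := by
    have : (src r).length ≤ r.length := List.length_filterMap_le _ _
    rw [src_append, List.length_append] at hsrc_len
    omega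
  obtain ⟨u, R, v, rfl, hR, hu⟩ := exists_ofMatches_window q k hmis_r hr
  have hsu : (src u).length ≤ u.length := List.length_filterMap_le _ _
  have htu : (tgt u).length ≤ u.length := List.length_filterMap_le _ _
  refine ⟨p ++ u, R, v, by simp, hR, ?_, ?_, ?_, ?_⟩ <;>
    simp only [src_append, tgt_append, List.length_append] <;> omega

end Alignment

section EditDistance

variable {w : Option σ → Option σ → ℝ}

lemma EdAux.nonneg (hw : IsWeight w) {X Y : List σ} {c : ℝ} (h : EdAux w X Y c) : 0 ≤ c := by
  induction h with
  | nil => exact le_rfl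
  | del a _ ih => linarith [hw.1 (some a) none]
  | ins b _ ih => linarith [hw.1 none (some b)]
  | sub a b _ ih => linarith [hw.1 (some a) (some b)]

lemma exists_edAux (w : Option σ → Option σ → ℝ) (X Y : List σ) : ∃ c, EdAux w X Y c := by
  induction X with
  | nil =>
    induction Y with
    | nil => exact ⟨0, EdAux.nil⟩
    | cons b Y ih => obtain ⟨c, hc⟩ := ih; exact ⟨_, hc.ins b⟩
  | cons a X ih => obtain ⟨c, hc⟩ := ih; exact ⟨_, hc.del a⟩

lemma ed_le_of_edAux (hw : IsWeight w) {X Y : List σ} {c : ℝ} (h : EdAux w X Y c) : ed w X Y ≤ c :=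
  csInf_le ⟨0, fun _ => EdAux.nonneg hw⟩ h

lemma exists_edAux_lt_ed_add (X Y : List σ) {ε : ℝ} (hε : 0 < ε) :
    ∃ c, EdAux w X Y c ∧ c < ed w X Y + ε :=
  Real.lt_sInf_add_pos (exists_edAux w X Y) hε

/-- The slack `c < k + 1` rather than `c ≤ k` is what lets us use near-optimal alignments
without knowing that the infimum `ed` is attained. -/
lemma ed_le_ed_of_edAux_imp (hw : IsWeight w) {X Y X' Y' : List σ} {k : ℝ}
    (h : ∀ c < k + 1, EdAux w X Y c → EdAux w X' Y' c) (hk : ed w X Y ≤ k) :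
    ed w X' Y' ≤ ed w X Y := by
  refine le_of_forall_pos_lt_add fun ε hε => ?_
  obtain ⟨c, hc, hlt⟩ := exists_edAux_lt_ed_add (w := w) X Y (lt_min hε one_pos)
  have hck : c < k + 1 := by linarith [min_le_right ε 1]
  calc ed w X' Y' ≤ c := ed_le_of_edAux hw (h c hck hc)
    _ < ed w X Y + ε := by linarith [min_le_left ε 1]

lemma edK_eq_of_edAux_iff (hw : IsWeight w) {X Y X' Y' : List σ} {k : ℝ}
    (h : ∀ c < k + 1, EdAux w X Y c ↔ EdAux w X' Y' c) : edK w k X Y = edK w k X' Y' := by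
  have hle := ed_le_ed_of_edAux_imp hw fun c hc => (h c hc).1
  have hge := ed_le_ed_of_edAux_imp hw fun c hc => (h c hc).2
  unfold edK
  by_cases hXY : ed w X Y ≤ k
  · have hX'Y' := (hle hXY).trans hXY
    rw [if_pos hXY, if_pos hX'Y', le_antisymm (hle hXY) (hge hX'Y')]
  · rw [if_neg hXY, if_neg fun h' => hXY ((hge h').trans h')]

end EditDistance

lemma listPow_succ (Q : List σ) (n : ℕ) : listPow Q (n + 1) = listPow Q n ++ Q := by
  simp [listPow, List.replicate_succ']

lemma listPow_succ' (Q : List σ) (n : ℕ) : listPow Q (n + 1) = Q ++ listPow Q n := by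
  simp [listPow, List.replicate_succ]

@[simp] lemma length_listPow (Q : List σ) (n : ℕ) : (listPow Q n).length = n * Q.length := by
  simp [listPow]

lemma take_append_drop_listPow {Q : List σ} {n t : ℕ} (ht : t + Q.length ≤ n * Q.length) :
    (listPow Q n).take (t + Q.length) ++ (listPow Q n).drop t = listPow Q (n + 1) := by
  have htake : (listPow Q n).take (t + Q.length) = (listPow Q (n + 1)).take (Q.length + t) := by
    rw [listPow_succ, List.take_append_of_le_length (by simpa [Nat.add_comm] using ht),
      Nat.add_comm]
  have hdrop : (listPow Q n).drop t = (listPow Q (n + 1)).drop (Q.length + t) := by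
    rw [listPow_succ', List.drop_length_add_append]
  rw [htake, hdrop, List.take_append_drop]

lemma take_append_drop_add_listPow_succ {Q : List σ} {n t : ℕ} (ht : t ≤ n * Q.length) :
    (listPow Q (n + 1)).take t ++ (listPow Q (n + 1)).drop (t + Q.length) = listPow Q n := by
  rw [listPow_succ, List.take_append_of_le_length (by simpa using ht), ← listPow_succ,
    listPow_succ', Nat.add_comm, List.drop_length_add_append, List.take_append_drop]

lemma pump_window {Q C D Y₁ R Y₂ : List σ} {n : ℕ} (h : Y₁ ++ R ++ Y₂ = C ++ listPow Q n ++ D)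
    (hR : R.length = Q.length) (hC : C.length ≤ Y₁.length)
    (hY₁ : Y₁.length + Q.length ≤ C.length + n * Q.length) :
    Y₁ ++ R ++ R ++ Y₂ = C ++ listPow Q (n + 1) ++ D := by
  obtain ⟨t, ht⟩ := Nat.exists_eq_add_of_le hC
  obtain ⟨hL, -⟩ := List.eq_append_take_of_append_eq (t := t + Q.length) h
    (by simp [ht, hR, Nat.add_assoc]) (by rw [length_listPow]; omega)
  obtain ⟨-, hR'⟩ := List.eq_append_take_of_append_eq (Y₁ := Y₁) (Y₂ := R ++ Y₂)
    (by simpa using h) ht (by rw [length_listPow]; omega)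
  rw [← take_append_drop_listPow (t := t) (by omega)]
  simp only [List.append_assoc] at hL hR' ⊢
  rw [← List.append_assoc Y₁, hL, hR']
  simp

lemma unpump_window {Q C D Y₁ R Y₂ : List σ} {n : ℕ}
    (h : Y₁ ++ R ++ Y₂ = C ++ listPow Q (n + 1) ++ D)
    (hR : R.length = Q.length) (hC : C.length ≤ Y₁.length)
    (hY₁ : Y₁.length ≤ C.length + n * Q.length) :
    Y₁ ++ Y₂ = C ++ listPow Q n ++ D := by
  obtain ⟨t, ht⟩ := Nat.exists_eq_add_of_le hC
  obtain ⟨hL, -⟩ := List.eq_append_take_of_append_eq (Y₁ := Y₁) (Y₂ := R ++ Y₂)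
    (by simpa using h) ht (by rw [length_listPow, Nat.add_mul]; omega)
  obtain ⟨-, hR'⟩ := List.eq_append_take_of_append_eq (t := t + Q.length) h
    (by simp [ht, hR, Nat.add_assoc]) (by rw [length_listPow, Nat.add_mul]; omega)
  rw [hL, hR', ← take_append_drop_add_listPow_succ (n := n) (t := t) (by omega)]
  simp

open Alignment in
lemma edAux_listPow_succ_iff {w : Option σ → Option σ → ℝ} (hw : Normalized w)
    {Q A B C D : List σ} {k f : ℕ} (hQ : Q ≠ []) (hk : 1 ≤ k) (hf : 4 * k ≤ f)
    (hAC : A.length ≤ C.length + k) (hCA : C.length ≤ A.length + k) {c : ℝ}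
    (hc : c < k + 1) :
    EdAux w (A ++ listPow Q f ++ B) (C ++ listPow Q f ++ D) c ↔
      EdAux w (A ++ listPow Q (f + 1) ++ B) (C ++ listPow Q (f + 1) ++ D) c := by
  classical
  have hq : 1 ≤ Q.length := List.length_pos_iff.mpr hQ
  have hwin : ∀ n, 4 * k ≤ n → 2 * k + Q.length * (k + 1) ≤ (listPow Q n).length := by
    intro n hn
    rw [length_listPow]
    nlinarith [Nat.mul_le_mul_right Q.length hn]
  have hmis : ∀ o : List (EditOp σ), cost w o = c → mismatches o ≤ k := by
    intro o ho
    have : (mismatches o : ℝ) < k + 1 := by linarith [mismatches_le_cost hw o]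
    exact Nat.lt_succ_iff.mp (by exact_mod_cast this)
  constructor
  · intro h
    obtain ⟨o, hs, ht, rfl⟩ := exists_of_edAux h
    obtain ⟨O₁, R, O₂, rfl, hR, h₁, h₂, h₃, h₄⟩ :=
      exists_matched_window hs ht (hmis o rfl) hAC hCA (hwin f hf)
    simp only [src_append, tgt_append, src_ofMatches, tgt_ofMatches, length_listPow] at hs ht h₂ h₄
    have := edAux_src_tgt w (O₁ ++ ofMatches R ++ ofMatches R ++ O₂)
    simp only [src_append, tgt_append, src_ofMatches, tgt_ofMatches, cost_append,
      cost_ofMatches hw.1, add_zero] at this ⊢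
    rwa [pump_window hs hR h₁ h₂, pump_window ht hR h₃ h₄] at this
  · intro h
    obtain ⟨o, hs, ht, rfl⟩ := exists_of_edAux h
    obtain ⟨O₁, R, O₂, rfl, hR, h₁, h₂, h₃, h₄⟩ :=
      exists_matched_window hs ht (hmis o rfl) hAC hCA (hwin (f + 1) (by omega))
    simp only [src_append, tgt_append, src_ofMatches, tgt_ofMatches, length_listPow] at hs ht h₂ h₄
    have := edAux_src_tgt w (O₁ ++ O₂)
    simp only [src_append, tgt_append, cost_append, cost_ofMatches hw.1, add_zero] at this ⊢
    rwa [unpump_window hs hR h₁ (by rw [Nat.add_mul] at h₂; omega),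
      unpump_window ht hR h₃ (by rw [Nat.add_mul] at h₄; omega)] at this

lemma edK_listPow_succ {w : Option σ → Option σ → ℝ} (hw : Normalized w)
    {Q A B C D : List σ} {k f : ℕ} (hQ : Q ≠ []) (hk : 1 ≤ k) (hf : 4 * k ≤ f)
    (hAC : A.length ≤ C.length + k) (hCA : C.length ≤ A.length + k) :
    edK w k (A ++ listPow Q (f + 1) ++ B) (C ++ listPow Q (f + 1) ++ D) =
      edK w k (A ++ listPow Q f ++ B) (C ++ listPow Q f ++ D) :=
  (edK_eq_of_edAux_iff hw.1 fun _ hc => edAux_listPow_succ_iff hw hQ hk hf hAC hCA hc).symm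

lemma edK_listPow_eq {w : Option σ → Option σ → ℝ} (hw : Normalized w)
    {Q A B C D : List σ} {k f : ℕ} (hQ : Q ≠ []) (hk : 1 ≤ k)
    (hAC : A.length ≤ C.length + k) (hCA : C.length ≤ A.length + k) (hf : 4 * k ≤ f) :
    edK w k (A ++ listPow Q f ++ B) (C ++ listPow Q f ++ D) =
      edK w k (A ++ listPow Q (4 * k) ++ B) (C ++ listPow Q (4 * k) ++ D) := by
  induction f, hf using Nat.le_induction with
  | base => rfl
  | succ f hf ih => rw [edK_listPow_succ hw hQ hk hf hAC hCA, ih]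

lemma OccursAt.length_take {P X : List σ} {p : ℕ} (h : OccursAt P X p) : (X.take p).length = p :=
  List.length_take_of_le (by have := h.1; omega)

lemma OccursAt.take_append_append_drop {P X : List σ} {p : ℕ} (h : OccursAt P X p) :
    X.take p ++ P ++ X.drop (p + P.length) = X := by
  have hP : (X.drop p).take P.length = P := by simpa [seg] using h.2
  calc X.take p ++ P ++ X.drop (p + P.length)
      = X.take p ++ ((X.drop p).take P.length ++ (X.drop p).drop P.length) := by
        rw [hP, List.drop_drop, List.append_assoc]
    _ = X := by rw [List.take_append_drop, List.take_append_drop]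

/-- For `k ≥ 1` and `e, e' ≥ 4k`, the strings `Q^e` and `Q^{e'}` are
`ed^w_{≤k}`-equivalent for every normalized weight function `w`. -/
theorem power_equivalence (k : ℕ) (hk : 1 ≤ k) (Q : List σ) (e e' : ℕ)
    (he : 4 * k ≤ e) (he' : 4 * k ≤ e')
    (w : Option σ → Option σ → ℝ) (hw : Normalized w) :
    EdEquiv w k (listPow Q e) (listPow Q e') := by
  intro X Y pX pY hX hY hXY
  rcases eq_or_ne Q [] with rfl | hQ
  · simp [listPow]
  rw [abs_le] at hXY
  have hAC : (X.take pX).length ≤ (Y.take pY).length + k := by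
    rw [hX.length_take, hY.length_take]; omega
  have hCA : (Y.take pY).length ≤ (X.take pX).length + k := by
    rw [hX.length_take, hY.length_take]; omega
  conv_lhs => rw [← hX.take_append_append_drop, ← hY.take_append_append_drop]
  rw [edK_listPow_eq hw hQ hk hAC hCA he, edK_listPow_eq hw hQ hk hAC hCA he']
end

section
/- There is a procedure that, given a forest F (a balanced parenthesis string of length n) and an integer t ≥ 2, produces a piece decomposition of F consisting of at most max(1, 6n/t − 1) pieces, each of length at most t, where each piece is either a balanced fragment or a context (a pair of fragments ⟨F[i..i'); F[j'..j)⟩ such that F[i..j) is a tree and F[i'..j') is balanced). -/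
variable {σ : Type*}

/-- Labelled parentheses: `(a, true)` is `(_a`, and `(a, false)` is `)_a`. -/
abbrev Par (σ : Type*) := σ × Bool

/-- Forests over `σ`: balanced strings of labelled parentheses. -/
inductive IsForest : List (Par σ) → Prop
  | nil : IsForest ([] : List (Par σ))
  | node (a : σ) {F G : List (Par σ)} :
      IsForest F → IsForest G → IsForest ((a, true) :: F ++ (a, false) :: G)

/-- A tree: a forest of the form `(_a F )_a`. -/
def IsTree (S : List (Par σ)) : Prop :=
  ∃ (a : σ) (F : List (Par σ)), IsForest F ∧ S = (a, true) :: F ++ [(a, false)]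

/-- `⟨F[i..i'); F[j'..j)⟩` is a context of `F`: `F[i..j)` is a tree and `F[i'..j')` is
balanced. -/
def IsContextAt (F : List (Par σ)) (i i' j' j : ℕ) : Prop :=
  i ≤ i' ∧ i' ≤ j' ∧ j' ≤ j ∧ j ≤ F.length ∧
  IsTree (seg F i j) ∧ IsForest (seg F i' j')

/-- A piece: either a balanced fragment `[i..j)`, or a context `(i, i', j', j)`
consisting of the two fragments `[i..i')` and `[j'..j)`. -/
abbrev Piece := (ℕ × ℕ) ⊕ (ℕ × ℕ × ℕ × ℕ)

/-- The length of a piece. -/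
def pieceLen : Piece → ℕ
  | Sum.inl (i, j) => j - i
  | Sum.inr (i, i', j', j) => (i' - i) + (j - j')

/-- `PD F i j D`: `D` is a piece decomposition of the balanced fragment `F[i..j)`. -/
inductive PD (F : List (Par σ)) : ℕ → ℕ → List Piece → Prop
  | empty (i : ℕ) : PD F i i []
  | whole (i j : ℕ) : i < j → j ≤ F.length → IsForest (seg F i j) →
      PD F i j [Sum.inl (i, j)]
  | split (i m j : ℕ) (D₁ D₂ : List Piece) : i < m → m < j →
      PD F i m D₁ → PD F m j D₂ → PD F i j (D₁ ++ D₂)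
  | context (i i' j' j : ℕ) (D' : List Piece) : IsContextAt F i i' j' j →
      PD F i' j' D' → PD F i j (Sum.inr (i, i', j', j) :: D')

lemma seg_length (F : List σ) {i j : ℕ} (hij : i ≤ j) (hj : j ≤ F.length) :
    (seg F i j).length = j - i := by
  simp [seg]; omega

lemma seg_split {F : List σ} {i j : ℕ} {A B : List σ}
    (h : seg F i j = A ++ B) (hij : i ≤ j) (hj : j ≤ F.length) :
    seg F i (i + A.length) = A ∧ seg F (i + A.length) j = B ∧ i + A.length ≤ j := by
  have hlen : j - i = A.length + B.length := by
    have h2 := seg_length F hij hj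
    rw [h] at h2; simp at h2; omega
  refine ⟨?_, ?_, by omega⟩
  · have e1 : seg F i (i + A.length) = (seg F i j).take A.length := by
      simp only [seg, List.take_take]
      congr 1
      omega
    rw [e1, h, List.take_left]
  · have e2 : seg F (i + A.length) j = (seg F i j).drop A.length := by
      simp only [seg, List.drop_take, List.drop_drop]
      congr 1
      omega
    rw [e2, h, List.drop_left]

lemma IsTree.two_le {S : List (Par σ)} (h : IsTree S) : 2 ≤ S.length := by
  obtain ⟨a, Fc, -, rfl⟩ := h; simp

lemma IsTree.isForest {S : List (Par σ)} (h : IsTree S) : IsForest S := by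
  obtain ⟨a, Fc, hFc, rfl⟩ := h
  simpa using IsForest.node a hFc IsForest.nil

lemma IsForest.append {A B : List (Par σ)} (hA : IsForest A) (hB : IsForest B) :
    IsForest (A ++ B) := by
  induction hA with
  | nil => simpa
  | node a hF hG ihF ihG =>
    rename_i Fc Gc
    have h2 : ((a, true) :: Fc ++ (a, false) :: Gc) ++ B
        = (a, true) :: Fc ++ (a, false) :: (Gc ++ B) := by simp
    rw [h2]
    exact IsForest.node a hF ihG

lemma forest_flatten {ts : List (List (Par σ))} (h : ∀ T ∈ ts, IsTree T) :
    IsForest ts.flatten := by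
  induction ts with
  | nil => exact IsForest.nil
  | cons T ts ih =>
    simp only [List.flatten_cons]
    exact ((h T (by simp)).isForest).append (ih fun T' hT' => h T' (by simp [hT']))

lemma exists_trees {G : List (Par σ)} (h : IsForest G) :
    ∃ ts : List (List (Par σ)), G = ts.flatten ∧ ∀ T ∈ ts, IsTree T := by
  induction h with
  | nil => exact ⟨[], by simp, by simp⟩
  | node a hF hG ihF ihG =>
    rename_i Fc Gc
    obtain ⟨ts, rfl, hts⟩ := ihG
    refine ⟨((a, true) :: Fc ++ [(a, false)]) :: ts, by simp, ?_⟩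
    intro T hT
    rcases List.mem_cons.mp hT with rfl | hT
    · exact ⟨a, Fc, hF, rfl⟩
    · exact hts T hT

lemma greedy_prefix : ∀ (ts : List (List (Par σ))) (b : ℕ), b < ts.flatten.length →
    ∃ us T vs, ts = us ++ T :: vs ∧ us.flatten.length ≤ b ∧
      b < us.flatten.length + T.length := by
  intro ts
  induction ts with
  | nil => intro b hb; simp at hb
  | cons T ts ih =>
    intro b hb
    by_cases hT : b < T.length
    · exact ⟨[], T, ts, by simp, by simp, by simpa⟩
    · push_neg at hT
      have h1 : b - T.length < ts.flatten.length := by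
        simp only [List.flatten_cons, List.length_append] at hb; omega
      obtain ⟨us, T', vs, rfl, h2, h3⟩ := ih (b - T.length) h1
      refine ⟨T :: us, T', vs, by simp, ?_, ?_⟩
      · simp only [List.flatten_cons, List.length_append]; omega
      · simp only [List.flatten_cons, List.length_append]; omega

lemma greedy_suffix : ∀ (ts : List (List (Par σ))) (b : ℕ),
    ∃ ms ws, ts = ms ++ ws ∧ ws.flatten.length ≤ b ∧
      (ms = [] ∨ b < ws.flatten.length + ms.flatten.length) := by
  intro ts
  induction ts with
  | nil => intro b; exact ⟨[], [], by simp, by simp, Or.inl rfl⟩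
  | cons T ts ih =>
    intro b
    obtain ⟨ms, ws, rfl, h1, h2⟩ := ih b
    rcases h2 with rfl | h2
    · by_cases hT : T.length + ws.flatten.length ≤ b
      · refine ⟨[], T :: ws, by simp, ?_, Or.inl rfl⟩
        simp only [List.flatten_cons, List.length_append]
        omega
      · refine ⟨[T], ws, by simp, h1, Or.inr ?_⟩
        simp only [List.flatten_cons, List.flatten_nil, List.append_nil,
          List.length_append]
        omega
    · refine ⟨T :: ms, ws, by simp, h1, Or.inr ?_⟩
      simp only [List.flatten_cons, List.length_append]
      omega

lemma shell (t : ℕ) (ht : 2 ≤ t) :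
    ∀ n (T : List (Par σ)), T.length ≤ n → IsTree T → ∀ b, 2 ≤ b → b ≤ t →
      t < 2 * b → b < T.length →
    ∃ pre inner suf : List (Par σ), T = pre ++ inner ++ suf ∧ IsForest inner ∧
      2 ≤ pre.length + suf.length ∧ pre.length + suf.length ≤ b ∧
      (2 * b ≤ 2 * (pre.length + suf.length) + t ∨ inner.length ≤ t ∨
        ∃ B R : List (Par σ), inner = B ++ R ∧ IsTree B ∧ IsForest R ∧
          b < B.length + (pre.length + suf.length) ∧
          b < R.length + (pre.length + suf.length)) := by
  intro n
  induction n using Nat.strong_induction_on with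
  | _ n ihn =>
  intro T hTn hT b hb2 hbt htb hbT
  obtain ⟨a, C, hC, rfl⟩ := hT
  obtain ⟨ts, rfl, hts⟩ := exists_trees hC
  have h1 : b - 2 < ts.flatten.length := by
    simp only [List.length_append, List.length_cons, List.length_nil] at hbT; omega
  obtain ⟨us, B1, vs, rfl, hP, hPB⟩ := greedy_prefix ts (b - 2) h1
  obtain ⟨ms, ws, rfl, hS, hblocked⟩ := greedy_suffix vs (b - 2 - us.flatten.length)
  have hB1 : IsTree B1 := hts B1 (by simp)
  have hmsT : ∀ T' ∈ ms, IsTree T' := fun T' h' => hts T' (by simp [h'])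
  have heq : (a, true) :: (us ++ B1 :: (ms ++ ws)).flatten ++ [(a, false)]
      = ((a, true) :: us.flatten) ++ (B1 ++ ms.flatten) ++ (ws.flatten ++ [(a, false)]) := by
    simp [List.flatten_append, List.flatten_cons]
  have hlenT : ((a, true) :: (us ++ B1 :: (ms ++ ws)).flatten ++ [(a, false)]).length
      = us.flatten.length + B1.length + (ms.flatten.length + ws.flatten.length) + 2 := by
    simp [List.flatten_append, List.flatten_cons]
    omega
  have hc : ((a, true) :: us.flatten).length + (ws.flatten ++ [(a, false)]).length
      = us.flatten.length + ws.flatten.length + 2 := by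
    simp only [List.length_append, List.length_cons, List.length_nil]
    omega
  have hB1two : 2 ≤ B1.length := hB1.two_le
  by_cases hstop : 2 * b ≤ 2 * (us.flatten.length + ws.flatten.length + 2) + t
  · refine ⟨(a, true) :: us.flatten, B1 ++ ms.flatten, ws.flatten ++ [(a, false)],
      heq, hB1.isForest.append (forest_flatten hmsT), ?_, ?_, ?_⟩
    · rw [hc]; omega
    · rw [hc]; rw [hlenT] at hbT; omega
    · left; rw [hc]; omega
  · rcases hblocked with rfl | hbl
    · -- ms = [], inner = B1
      by_cases hsm : B1.length ≤ t
      · refine ⟨(a, true) :: us.flatten, B1 ++ List.flatten [], ws.flatten ++ [(a, false)],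
          heq, hB1.isForest.append (forest_flatten hmsT), ?_, ?_, ?_⟩
        · rw [hc]; omega
        · rw [hc]; rw [hlenT] at hbT; omega
        · right; left; simpa using hsm
      · push_neg at hsm
        have hcb : us.flatten.length + ws.flatten.length + 2 ≤ b := by omega
        have hBn : B1.length < n := by rw [hlenT] at hTn; omega
        have hrec := ihn B1.length hBn B1 le_rfl hB1
          (b - (us.flatten.length + ws.flatten.length + 2))
          (by omega) (by omega) (by omega) (by omega)
        obtain ⟨pre', inner', suf', hBe, hF', hc2', hcb', hdisj'⟩ := hrec
        refine ⟨((a, true) :: us.flatten) ++ pre', inner',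
          suf' ++ (ws.flatten ++ [(a, false)]), ?_, hF', ?_, ?_, ?_⟩
        · rw [heq, hBe]; simp [List.append_assoc]
        · simp only [List.length_append, List.length_cons]; omega
        · simp only [List.length_append, List.length_cons, List.length_nil]; omega
        · have hclen : (((a, true) :: us.flatten) ++ pre').length
              + (suf' ++ (ws.flatten ++ [(a, false)])).length
              = (us.flatten.length + ws.flatten.length + 2)
                + (pre'.length + suf'.length) := by
            simp only [List.length_append, List.length_cons, List.length_nil]
            omega
          rw [hclen]
          rcases hdisj' with h' | h' | h'
          · left; omega
          · right; left; exact h'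
          · right; right
            obtain ⟨B, R, hBR, hB, hR, hx1, hx2⟩ := h'
            exact ⟨B, R, hBR, hB, hR, by omega, by omega⟩
    · -- blocked: heavy case
      refine ⟨(a, true) :: us.flatten, B1 ++ ms.flatten, ws.flatten ++ [(a, false)],
        heq, hB1.isForest.append (forest_flatten hmsT), ?_, ?_, ?_⟩
      · rw [hc]; omega
      · rw [hc]; rw [hlenT] at hbT; omega
      · right; right
        refine ⟨B1, ms.flatten, rfl, hB1, forest_flatten hmsT, ?_, ?_⟩
        · rw [hc]; omega
        · rw [hc]; omega

lemma PD.glue {F : List (Par σ)} {i m j : ℕ} {D1 D2 : List Piece}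
    (him : i ≤ m) (hmj : m ≤ j) (h1 : PD F i m D1) (h2 : PD F m j D2)
    (e1 : i = m → D1 = []) (e2 : m = j → D2 = []) : PD F i j (D1 ++ D2) := by
  rcases eq_or_lt_of_le him with rfl | him'
  · rw [e1 rfl]; simpa using h2
  · rcases eq_or_lt_of_le hmj with rfl | hmj'
    · rw [e2 rfl]; simpa using h1
    · exact PD.split i m j D1 D2 him' hmj' h1 h2

lemma main_decomp (F : List (Par σ)) (t : ℕ) (ht : 2 ≤ t) :
    ∀ n i, i + n ≤ F.length →
      ((t < n → IsTree (seg F i (i + n)) → ∃ D : List Piece, PD F i (i + n) D ∧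
          (∀ p ∈ D, pieceLen p ≤ t) ∧ t * D.length + 4 * t ≤ 6 * n) ∧
       (IsForest (seg F i (i + n)) → ∃ D : List Piece, PD F i (i + n) D ∧
          (∀ p ∈ D, pieceLen p ≤ t) ∧ (n = 0 → D = []) ∧ (n ≤ t → D.length ≤ 1) ∧
          (t < n → t * D.length + 2 * t ≤ 6 * n))) := by
  intro n
  induction n using Nat.strong_induction_on with
  | _ n ih =>
  intro i hin
  have hseglen : (seg F i (i + n)).length = n := by
    rw [seg_length F (by omega) hin]; omega
  have hBpart : t < n → IsTree (seg F i (i + n)) → ∃ D : List Piece, PD F i (i + n) D ∧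
      (∀ p ∈ D, pieceLen p ≤ t) ∧ t * D.length + 4 * t ≤ 6 * n := by
    intro htn htree
    obtain ⟨pre, inner, suf, hGe, hFin, hc2, hcb, hdisj⟩ :=
      shell t ht (seg F i (i + n)).length (seg F i (i + n)) le_rfl htree t ht le_rfl
        (by omega) (by rw [hseglen]; exact htn)
    rw [List.append_assoc] at hGe
    obtain ⟨hsp1, hsp2, hle1⟩ := seg_split hGe (by omega) hin
    obtain ⟨hsp3, hsp4, hle2⟩ := seg_split hsp2 hle1 hin
    have hnsum : n = pre.length + (inner.length + suf.length) := by
      have h2 := hseglen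
      rw [hGe] at h2
      simp only [List.length_append] at h2
      omega
    have hctx : IsContextAt F i (i + pre.length) (i + pre.length + inner.length) (i + n) :=
      ⟨by omega, by omega, by omega, hin, htree, by rw [hsp3]; exact hFin⟩
    have hinlt : inner.length < n := by omega
    obtain ⟨D', hPD', hps', hz', h1', hbig'⟩ :=
      (ih inner.length hinlt (i + pre.length) (by omega)).2 (by rw [hsp3]; exact hFin)
    have hctxlen : pieceLen (Sum.inr (i, i + pre.length,
        i + pre.length + inner.length, i + n)) ≤ t := by
      simp only [pieceLen]
      omega
    by_cases hit : inner.length ≤ t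
    · refine ⟨_, PD.context i _ _ _ D' hctx hPD', ?_, ?_⟩
      · intro p hp
        rcases List.mem_cons.mp hp with rfl | hp
        · exact hctxlen
        · exact hps' p hp
      · have hD1 : D'.length ≤ 1 := h1' hit
        have hm : t * D'.length ≤ t * 1 := Nat.mul_le_mul_left t hD1
        simp only [List.length_cons]
        linarith
    · push_neg at hit
      by_cases hstop : t ≤ 2 * (pre.length + suf.length)
      · have hbb := hbig' hit
        refine ⟨_, PD.context i _ _ _ D' hctx hPD', ?_, ?_⟩
        · intro p hp
          rcases List.mem_cons.mp hp with rfl | hp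
          · exact hctxlen
          · exact hps' p hp
        · simp only [List.length_cons]
          linarith
      · push_neg at hstop
        have hdisj3 : ∃ B R : List (Par σ), inner = B ++ R ∧ IsTree B ∧ IsForest R ∧
            t < B.length + (pre.length + suf.length) ∧
            t < R.length + (pre.length + suf.length) := by
          rcases hdisj with h | h | h
          · omega
          · omega
          · exact h
        obtain ⟨B, R, hBR, hBtree, hRfor, hBc, hRc⟩ := hdisj3
        have hBRlen : inner.length = B.length + R.length := by rw [hBR]; simp
        obtain ⟨hsB, hsR, hleB⟩ := seg_split (hsp3.trans hBR) (by omega) (by omega)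
        have hB2 : 2 ≤ B.length := hBtree.two_le
        have hR1 : 1 ≤ R.length := by omega
        -- decomposition of B
        have hDB : ∃ DB : List Piece, PD F (i + pre.length) (i + pre.length + B.length) DB ∧
            (∀ p ∈ DB, pieceLen p ≤ t) ∧ (B.length ≤ t → DB.length ≤ 1) ∧
            (t < B.length → t * DB.length + 4 * t ≤ 6 * B.length) := by
          rcases le_or_gt B.length t with hBt | hBt
          · obtain ⟨DB, a1, a2, a3, a4, a5⟩ :=
              (ih B.length (by omega) (i + pre.length) (by omega)).2
                (by rw [hsB]; exact hBtree.isForest)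
            exact ⟨DB, a1, a2, fun _ => a4 hBt, fun h => absurd h (by omega)⟩
          · obtain ⟨DB, a1, a2, a3⟩ :=
              (ih B.length (by omega) (i + pre.length) (by omega)).1 hBt
                (by rw [hsB]; exact hBtree)
            exact ⟨DB, a1, a2, fun h => absurd h (by omega), fun _ => a3⟩
        obtain ⟨DB, hPDB, hpsB, hB1, hBbig⟩ := hDB
        obtain ⟨DR, hPDR, hpsR, hzR, h1R, hbigR⟩ :=
          (ih R.length (by omega) (i + pre.length + B.length) (by omega)).2
            (by rw [show i + pre.length + B.length + R.length
                  = i + pre.length + inner.length from by omega, hsR]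
                exact hRfor)
        have e3 : i + pre.length + B.length + R.length = i + pre.length + inner.length := by
          omega
        rw [e3] at hPDR
        have hsplit : PD F (i + pre.length) (i + pre.length + inner.length) (DB ++ DR) :=
          PD.split _ _ _ DB DR (by omega) (by omega) hPDB hPDR
        refine ⟨_, PD.context i _ _ _ (DB ++ DR) hctx hsplit, ?_, ?_⟩
        · intro p hp
          rcases List.mem_cons.mp hp with rfl | hp
          · exact hctxlen
          · rcases List.mem_append.mp hp with hp | hp
            · exact hpsB p hp
            · exact hpsR p hp
        · simp only [List.length_cons, List.length_append]
          have hnn : n = pre.length + suf.length + B.length + R.length := by omega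
          rcases le_or_gt B.length t with hBt | hBt
          · have hp1 : t * DB.length ≤ t * 1 := Nat.mul_le_mul_left t (hB1 hBt)
            rcases le_or_gt R.length t with hRt | hRt
            · have hr1 : t * DR.length ≤ t * 1 := Nat.mul_le_mul_left t (h1R hRt)
              linarith
            · have hrb := hbigR hRt
              linarith
          · have hbb := hBbig hBt
            rcases le_or_gt R.length t with hRt | hRt
            · have hr1 : t * DR.length ≤ t * 1 := Nat.mul_le_mul_left t (h1R hRt)
              linarith
            · have hrb := hbigR hRt
              linarith
  refine ⟨hBpart, ?_⟩
  intro hforest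
  rcases Nat.eq_zero_or_pos n with rfl | hn0
  · exact ⟨[], by simpa using PD.empty i, by simp, fun _ => rfl, by simp, by omega⟩
  rcases le_or_gt n t with hnt | hnt
  · refine ⟨[Sum.inl (i, i + n)], PD.whole i (i + n) (by omega) hin hforest, ?_, ?_, ?_, ?_⟩
    · intro p hp
      rcases List.mem_singleton.mp hp with rfl
      simp only [pieceLen]
      omega
    · intro h0; omega
    · intro _; simp
    · intro h; omega
  · -- main case: n > t
    obtain ⟨ts, hGts, hts⟩ := exists_trees hforest
    have hflat : ts.flatten.length = n := by rw [← hGts, hseglen]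
    obtain ⟨us, T, vs, hts_eq, hP, hPB⟩ := greedy_prefix ts t (by rw [hflat]; exact hnt)
    have hGe : seg F i (i + n) = us.flatten ++ (T ++ vs.flatten) := by
      rw [hGts, hts_eq]
      simp [List.flatten_append, List.flatten_cons]
    obtain ⟨hs1, hs2, hle1⟩ := seg_split hGe (by omega) hin
    obtain ⟨hs3, hs4, hle2⟩ := seg_split hs2 hle1 hin
    have hTtree : IsTree T := hts T (by rw [hts_eq]; simp)
    have hT2 : 2 ≤ T.length := hTtree.two_le
    have hnsum : n = us.flatten.length + (T.length + vs.flatten.length) := by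
      rw [← hflat, hts_eq]
      simp [List.flatten_append, List.flatten_cons]
    -- prefix decomposition
    obtain ⟨Dp, hPDp, hpsp, hzp, h1p, _⟩ :=
      (ih us.flatten.length (by omega) i (by omega)).2
        (by rw [hs1]
            exact forest_flatten (fun T' h' => hts T' (by rw [hts_eq]; simp [h'])))
    -- middle tree decomposition
    have hDT : ∃ DT : List Piece,
        PD F (i + us.flatten.length) (i + us.flatten.length + T.length) DT ∧
        (∀ p ∈ DT, pieceLen p ≤ t) ∧ (T.length ≤ t → DT.length ≤ 1) ∧
        (t < T.length → t * DT.length + 4 * t ≤ 6 * T.length) := by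
      rcases le_or_gt T.length t with hTt | hTt
      · refine ⟨[Sum.inl (i + us.flatten.length, i + us.flatten.length + T.length)],
          PD.whole _ _ (by omega) (by omega) (by rw [hs3]; exact hTtree.isForest),
          ?_, fun _ => by simp, fun h => absurd h (by omega)⟩
        intro p hp
        rcases List.mem_singleton.mp hp with rfl
        simp only [pieceLen]
        omega
      · rcases eq_or_lt_of_le (show T.length ≤ n by omega) with hq | hq
        · have h0 : us.flatten.length = 0 := by omega
          have hv0 : vs.flatten.length = 0 := by omega
          have e1 : i + us.flatten.length = i := by omega
          have e2 : i + us.flatten.length + T.length = i + n := by omega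
          rw [e2, e1]
          rw [e2, e1] at hs3
          obtain ⟨DT, a1, a2, a3⟩ := hBpart (by omega) (by rw [hs3]; exact hTtree)
          exact ⟨DT, a1, a2, fun h => absurd h (by omega), fun _ => by rw [← hq] at a3; omega⟩
        · obtain ⟨DT, a1, a2, a3⟩ :=
            (ih T.length hq (i + us.flatten.length) (by omega)).1 hTt
              (by rw [hs3]; exact hTtree)
          exact ⟨DT, a1, a2, fun h => absurd h (by omega), fun _ => a3⟩
    obtain ⟨DT, hPDT, hpsT, hT1, hTbig⟩ := hDT
    -- suffix decomposition
    obtain ⟨Dr, hPDr, hpsr, hzr, h1r, hbigr⟩ :=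
      (ih vs.flatten.length (by omega) (i + us.flatten.length + T.length) (by omega)).2
        (by rw [show i + us.flatten.length + T.length + vs.flatten.length = i + n from
              by omega, hs4]
            exact forest_flatten (fun T' h' => hts T' (by rw [hts_eq]; simp [h'])))
    rw [show i + us.flatten.length + T.length + vs.flatten.length = i + n from by omega]
      at hPDr
    have hglue : PD F i (i + n) (Dp ++ (DT ++ Dr)) := by
      refine PD.glue (by omega) (by omega) hPDp
        (PD.glue (by omega) (by omega) hPDT hPDr
          (fun h => absurd h (by omega)) (fun h => hzr (by omega)))
        (fun h => hzp (by omega)) (fun h => absurd h (by omega))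
    refine ⟨Dp ++ (DT ++ Dr), hglue, ?_, ?_, ?_, ?_⟩
    · intro p hp
      rcases List.mem_append.mp hp with hp | hp
      · exact hpsp p hp
      · rcases List.mem_append.mp hp with hp | hp
        · exact hpsT p hp
        · exact hpsr p hp
    · intro h0; omega
    · intro h; omega
    · intro _
      simp only [List.length_append]
      have hp1 : t * Dp.length ≤ t * 1 := Nat.mul_le_mul_left t (h1p hP)
      rcases le_or_gt T.length t with hTt | hTt
      · have ht1 : t * DT.length ≤ t * 1 := Nat.mul_le_mul_left t (hT1 hTt)
        rcases le_or_gt vs.flatten.length t with hrt | hrt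
        · have hr1 : t * Dr.length ≤ t * 1 := Nat.mul_le_mul_left t (h1r hrt)
          linarith
        · have hrb := hbigr hrt
          linarith
      · have htb := hTbig hTt
        rcases le_or_gt vs.flatten.length t with hrt | hrt
        · have hr1 : t * Dr.length ≤ t * 1 := Nat.mul_le_mul_left t (h1r hrt)
          linarith
        · have hrb := hbigr hrt
          linarith

/-- Given a forest `F` of length `n` and an integer `t ≥ 2`, there is a
piece decomposition of `F` consisting of at most `max(1, 6n/t − 1)` pieces, each of
length at most `t`. -/
theorem piece_decomposition_exists (F : List (Par σ)) (hF : IsForest F)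
    (t : ℕ) (ht : 2 ≤ t) :
    ∃ D : List Piece, PD F 0 F.length D ∧
      (∀ p ∈ D, pieceLen p ≤ t) ∧
      (D.length : ℝ) ≤ max 1 (6 * (F.length : ℝ) / (t : ℝ) - 1) := by
  obtain ⟨D, hPD, hps, hz, h1, hbig⟩ :=
    (main_decomp F t ht F.length 0 (by simp)).2 (by simpa [seg] using hF)
  refine ⟨D, by simpa using hPD, hps, ?_⟩
  rcases le_or_gt F.length t with hn | hn
  · have hD1 : D.length ≤ 1 := h1 hn
    exact le_max_of_le_left (by exact_mod_cast hD1)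
  · have hb := hbig hn
    have ht0 : (0:ℝ) < t := by
      have : 0 < t := by omega
      exact_mod_cast this
    refine le_max_of_le_right ?_
    have h3 : (t:ℝ) * D.length + 2 * t ≤ 6 * F.length := by exact_mod_cast hb
    rw [le_sub_iff_add_le, le_div_iff₀ ht0]
    linarith
end
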